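/- arXiv:1506.03528 — 2 statements merged into one kernel-verified Lean document; each statement's English description precedes it below -/
import Mathlib

section
/- Every AVL tree on n nodes can be built from the empty tree by a sequence of n leaf insertions such that the rebalancing after each insertion performs only promotions (rank increases) and no rotations. -/
inductive RTree : Type
  | nil : RTree
  | node : RTree → ℤ → RTree → RTree
  deriving DecidableEq

namespace RTree

/-- The rank of a ranked binary tree: missing nodes have rank -1. -/
def rank : RTree → ℤ
  | nil => -1
  | node _ k _ => k

/-- Number of nodes. -/
def size : RTree → ℕ
  | nil => 0
  | node l _ r => size l + size r + 1

/-- Height: a missing node has height -1, a leaf height 0. -/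
def height : RTree → ℤ
  | nil => -1
  | node l _ r => max (height l) (height r) + 1

/-- An AVL tree: a ranked binary tree in which every node is a 1,1-node or a
1,2-node (missing children have rank -1), with non-negative ranks. -/
def IsAVL : RTree → Prop
  | nil => True
  | node l k r =>
      IsAVL l ∧ IsAVL r ∧ 0 ≤ k ∧
      ((k - rank l = 1 ∧ k - rank r = 1) ∨
       (k - rank l = 1 ∧ k - rank r = 2) ∨
       (k - rank l = 2 ∧ k - rank r = 1))

/-- The subtree of `t` at the position given by a list of directions
(`false` = left, `true` = right); `none` if the position does not exist. -/
def subtreeAt : RTree → List Bool → Option RTree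
  | t, [] => some t
  | nil, _ :: _ => none
  | node l _ r, b :: p => subtreeAt (if b then r else l) p

/-- Rebalancing after an insertion in the left subtree.  Returns the new tree
together with the number of promotions and the number of rotations performed
at this node (a double rotation counts as two rotations). -/
def rebalInsL (l : RTree) (k : ℤ) (r : RTree) : RTree × ℕ × ℕ :=
  if k - rank l ≠ 0 then (node l k r, 0, 0)
  else if k - rank r = 1 then (node l (k + 1) r, 1, 0)
  else
    match l with
    | nil => (node l k r, 0, 0)
    | node ll lk lr =>
      if lk - rank ll = 1 then
        -- single rotation
        (node ll k (node lr (k - 1) r), 0, 1)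
      else
        match lr with
        | nil => (node l k r, 0, 0)
        | node a _ b =>
          -- double rotation
          (node (node ll (k - 1) a) k (node b (k - 1) r), 0, 2)

/-- Mirror image of `rebalInsL`: rebalancing after an insertion in the right
subtree. -/
def rebalInsR (l : RTree) (k : ℤ) (r : RTree) : RTree × ℕ × ℕ :=
  if k - rank r ≠ 0 then (node l k r, 0, 0)
  else if k - rank l = 1 then (node l (k + 1) r, 1, 0)
  else
    match r with
    | nil => (node l k r, 0, 0)
    | node rl rk rr =>
      if rk - rank rr = 1 then
        (node (node l (k - 1) rl) k rr, 0, 1)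
      else
        match rl with
        | nil => (node l k r, 0, 0)
        | node a _ b =>
          (node (node l (k - 1) a) k (node b (k - 1) rr), 0, 2)

/-- Insert a new rank-0 leaf at the (missing-node) position `p` and rebalance
bottom-up.  Returns the new tree, the total number of promotions, and the
total number of rotations (a double rotation counting as two). -/
def insAt : RTree → List Bool → RTree × ℕ × ℕ
  | nil, _ => (node nil 0 nil, 0, 0)
  | node l k r, [] => (node l k r, 0, 0)
  | node l k r, false :: p =>
      match insAt l p with
      | (l', pr, ro) =>
        match rebalInsL l' k r with
        | (t, pr', ro') => (t, pr + pr', ro + ro')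
  | node l k r, true :: p =>
      match insAt r p with
      | (r', pr, ro) =>
        match rebalInsR l k r' with
        | (t, pr', ro') => (t, pr + pr', ro + ro')

/-- Delete the "last inserted" node: follow 1-children down to a leaf. -/
def del : RTree → RTree × List Bool × Bool
  | nil => (nil, [], false)
  | node l k r =>
    if k = 0 then (nil, [], true)
    else if k - rank l = 1 then
      match del l with
      | (l', p, b) =>
        if b ∧ k - rank r = 2 then (node l' (k-1) r, false :: p, true)
        else (node l' k r, false :: p, false)
    else
      match del r with
      | (r', p, b) =>
        if b ∧ k - rank l = 2 then (node l (k-1) r', true :: p, true)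
        else (node l k r', true :: p, false)

lemma rank_nonneg : ∀ t : RTree, IsAVL t → -1 ≤ rank t
  | nil, _ => le_refl _
  | node l k r, h => by simpa [rank] using le_trans (by norm_num) h.2.2.1

lemma eq_nil_of_rank (t : RTree) (h : IsAVL t) (hr : rank t = -1) : t = nil := by
  cases t with
  | nil => rfl
  | node l k r => simp [rank] at hr; simp [IsAVL] at h; omega

lemma del_spec : ∀ t : RTree, IsAVL t → t ≠ nil →
    IsAVL (del t).1 ∧ size (del t).1 + 1 = size t ∧
    subtreeAt (del t).1 (del t).2.1 = some nil ∧
    (insAt (del t).1 (del t).2.1).1 = t ∧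
    (insAt (del t).1 (del t).2.1).2.2 = 0 ∧
    ((del t).2.2 = true → rank (del t).1 = rank t - 1) ∧
    ((del t).2.2 = false → rank (del t).1 = rank t) := by
  intro t
  induction t with
  | nil => intro _ h; exact absurd rfl h
  | node l k r ihl ihr =>
    intro hT _
    obtain ⟨hl, hr, hk, hd⟩ := hT
    have hlr := rank_nonneg l hl
    have hrr := rank_nonneg r hr
    by_cases hk0 : k = 0
    · subst hk0
      have hl' : l = nil := eq_nil_of_rank l hl (by omega)
      have hr' : r = nil := eq_nil_of_rank r hr (by omega)
      subst hl'; subst hr'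
      simp [del, size, subtreeAt, insAt, rank, IsAVL]
    · by_cases hdl : k - rank l = 1
      · -- recurse into the left child
        have hlne : l ≠ nil := by
          intro h; subst h; simp [rank] at hdl; omega
        obtain ⟨⟨l', p, b⟩, hdel⟩ : ∃ x, del l = x := ⟨_, rfl⟩
        obtain ⟨ih1, ih2, ih3, ih4, ih5, ih6, ih7⟩ := ihl hl hlne
        rw [hdel] at ih1 ih2 ih3 ih4 ih5 ih6 ih7
        simp only at ih1 ih2 ih3 ih4 ih5 ih6 ih7
        have hins : insAt l' p = (l, (insAt l' p).2.1, 0) :=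
          Prod.ext ih4 (Prod.ext rfl ih5)
        by_cases hb : b = true ∧ k - rank r = 2
        · have hbl : rank l' = rank l - 1 := ih6 hb.1
          have hcomp : del (node l k r) = (node l' (k-1) r, false :: p, true) := by
            simp only [del]
            rw [if_neg hk0, if_pos hdl, hdel]
            simp [hb.1, hb.2]
          have hreb : rebalInsL l (k-1) r = (node l k r, 1, 0) := by
            unfold rebalInsL
            rw [if_neg (by omega : ¬(k - 1 - rank l ≠ 0)),
                if_pos (by omega : k - 1 - rank r = 1)]
            have : k - 1 + 1 = k := by ring
            rw [this]
          have hia : insAt (node l' (k-1) r) (false :: p)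
              = (node l k r, (insAt l' p).2.1 + 1, 0) := by
            simp only [insAt]
            rw [hins, hreb]; rfl
          rw [hcomp]
          refine ⟨⟨ih1, hr, by omega, by omega⟩, ?_, ?_, ?_, ?_, ?_, ?_⟩
          · simp only [size]; omega
          · simpa [subtreeAt] using ih3
          · simp [hia]
          · simp [hia]
          · intro _; simp [rank]
          · intro h; simp at h
        · have hranks : rank l' = rank l - 1 ∧ k - rank r = 1 ∨ rank l' = rank l := by
            cases b with
            | false => exact Or.inr (ih7 rfl)
            | true =>
              have hne2 : k - rank r ≠ 2 := fun hc => hb ⟨rfl, hc⟩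
              exact Or.inl ⟨ih6 rfl, by omega⟩
          have hcomp : del (node l k r) = (node l' k r, false :: p, false) := by
            simp only [del]
            rw [if_neg hk0, if_pos hdl, hdel]
            simp only [if_neg hb]
          have hreb : rebalInsL l k r = (node l k r, 0, 0) := by
            unfold rebalInsL
            rw [if_pos (by omega : k - rank l ≠ 0)]
          have hia : insAt (node l' k r) (false :: p)
              = (node l k r, (insAt l' p).2.1 + 0, 0) := by
            simp only [insAt]
            rw [hins, hreb]; rfl
          rw [hcomp]
          refine ⟨⟨ih1, hr, hk, by omega⟩, ?_, ?_, ?_, ?_, ?_, ?_⟩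
          · simp only [size]; omega
          · simpa [subtreeAt] using ih3
          · simp [hia]
          · simp [hia]
          · intro h; simp at h
          · intro _; simp [rank]
      · -- recurse into the right child
        have hdl2 : k - rank l = 2 ∧ k - rank r = 1 := by omega
        have hrne : r ≠ nil := by
          intro h; subst h; simp [rank] at hdl2; omega
        obtain ⟨⟨r', p, b⟩, hdel⟩ : ∃ x, del r = x := ⟨_, rfl⟩
        obtain ⟨ih1, ih2, ih3, ih4, ih5, ih6, ih7⟩ := ihr hr hrne
        rw [hdel] at ih1 ih2 ih3 ih4 ih5 ih6 ih7
        simp only at ih1 ih2 ih3 ih4 ih5 ih6 ih7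
        have hins : insAt r' p = (r, (insAt r' p).2.1, 0) :=
          Prod.ext ih4 (Prod.ext rfl ih5)
        by_cases hb : b = true ∧ k - rank l = 2
        · have hbl : rank r' = rank r - 1 := ih6 hb.1
          have hcomp : del (node l k r) = (node l (k-1) r', true :: p, true) := by
            simp only [del]
            rw [if_neg hk0, if_neg hdl, hdel]
            simp [hb.1, hb.2]
          have hreb : rebalInsR l (k-1) r = (node l k r, 1, 0) := by
            unfold rebalInsR
            rw [if_neg (by omega : ¬(k - 1 - rank r ≠ 0)),
                if_pos (by omega : k - 1 - rank l = 1)]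
            have : k - 1 + 1 = k := by ring
            rw [this]
          have hia : insAt (node l (k-1) r') (true :: p)
              = (node l k r, (insAt r' p).2.1 + 1, 0) := by
            simp only [insAt]
            rw [hins, hreb]; rfl
          rw [hcomp]
          refine ⟨⟨hl, ih1, by omega, by omega⟩, ?_, ?_, ?_, ?_, ?_, ?_⟩
          · simp only [size]; omega
          · simpa [subtreeAt] using ih3
          · simp [hia]
          · simp [hia]
          · intro _; simp [rank]
          · intro h; simp at h
        · have hranks : rank r' = rank r - 1 ∧ k - rank l = 1 ∨ rank r' = rank r := by
            cases b with
            | false => exact Or.inr (ih7 rfl)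
            | true =>
              have hne2 : k - rank l ≠ 2 := fun hc => hb ⟨rfl, hc⟩
              exact Or.inl ⟨ih6 rfl, by omega⟩
          have hcomp : del (node l k r) = (node l k r', true :: p, false) := by
            simp only [del]
            rw [if_neg hk0, if_neg hdl, hdel]
            simp only [if_neg hb]
          have hreb : rebalInsR l k r = (node l k r, 0, 0) := by
            unfold rebalInsR
            rw [if_pos (by omega : k - rank r ≠ 0)]
          have hia : insAt (node l k r') (true :: p)
              = (node l k r, (insAt r' p).2.1 + 0, 0) := by
            simp only [insAt]
            rw [hins, hreb]; rfl
          rw [hcomp]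
          refine ⟨⟨hl, ih1, hk, by omega⟩, ?_, ?_, ?_, ?_, ?_, ?_⟩
          · simp only [size]; omega
          · simpa [subtreeAt] using ih3
          · simp [hia]
          · simp [hia]
          · intro h; simp at h
          · intro _; simp [rank]

lemma build_aux : ∀ (n : ℕ) (t : RTree), IsAVL t → size t = n →
    ∃ (f : ℕ → RTree) (q : ℕ → List Bool),
      f 0 = nil ∧ f n = t ∧
      ∀ i < n,
        subtreeAt (f i) (q i) = some nil ∧
        f (i + 1) = (insAt (f i) (q i)).1 ∧
        (insAt (f i) (q i)).2.2 = 0 := by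
  intro n
  induction n with
  | zero =>
    intro t _ hs
    have ht : t = nil := by
      cases t with
      | nil => rfl
      | node l k r => simp [size] at hs
    exact ⟨fun _ => nil, fun _ => [], rfl, ht.symm, by omega⟩
  | succ n ih =>
    intro t ht hs
    have htne : t ≠ nil := by intro h; subst h; simp [size] at hs
    obtain ⟨d1, d2, d3, d4, d5, -, -⟩ := del_spec t ht htne
    obtain ⟨f, q, hf0, hfn, hstep⟩ := ih (del t).1 d1 (by omega)
    refine ⟨fun i => if i = n + 1 then t else f i,
            fun i => if i = n then (del t).2.1 else q i, by simp [hf0], by simp, ?_⟩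
    intro i hi
    by_cases hin : i = n
    · subst hin
      simp only [if_pos rfl, if_neg (Ne.symm (Nat.succ_ne_self _)), hfn]
      exact ⟨d3, d4.symm, d5⟩
    · have hi' : i < n := by omega
      obtain ⟨s1, s2, s3⟩ := hstep i hi'
      simp only [if_neg (by omega : i ≠ n + 1), if_neg hin,
        if_neg (by omega : i + 1 ≠ n + 1)]
      exact ⟨s1, s2, s3⟩

/-- Every AVL tree on `n` nodes can be built from the empty tree by `n` leaf
insertions, each of which does only promotions (no rotations). -/
theorem build_by_promotion_only_insertions (t : RTree) (hT : IsAVL t) :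
    ∃ (f : ℕ → RTree) (q : ℕ → List Bool),
      f 0 = nil ∧ f (size t) = t ∧
      ∀ i < size t,
        subtreeAt (f i) (q i) = some nil ∧
        f (i + 1) = (insAt (f i) (q i)).1 ∧
        (insAt (f i) (q i)).2.2 = 0 :=
  build_aux (size t) t hT rfl

end RTree
end

section
/- Among all sequences of insertions converting the truncation of an AVL tree T back into T, each insertion in the construction of Theorem 1 causes at most one promotion per level, and exactly one insertion in the sequence increases the rank of the root. -/
namespace RTree

/-- The truncation of a tree: delete all leaves and decrease the rank of
each remaining node by 1. -/
def truncate : RTree → RTree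
  | nil => nil
  | node nil _ nil => nil
  | node l k r => node (truncate l) (k - 1) (truncate r)

lemma insAt_left (l : RTree) (k : ℤ) (r : RTree) (p : List Bool) :
    insAt (node l k r) (false :: p) =
      ((rebalInsL (insAt l p).1 k r).1,
       (insAt l p).2.1 + (rebalInsL (insAt l p).1 k r).2.1,
       (insAt l p).2.2 + (rebalInsL (insAt l p).1 k r).2.2) := rfl

lemma insAt_right (l : RTree) (k : ℤ) (r : RTree) (p : List Bool) :
    insAt (node l k r) (true :: p) =
      ((rebalInsR l k (insAt r p).1).1,
       (insAt r p).2.1 + (rebalInsR l k (insAt r p).1).2.1,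
       (insAt r p).2.2 + (rebalInsR l k (insAt r p).1).2.2) := rfl

lemma rebalInsL_noop {k : ℤ} {l : RTree} (r : RTree) (h : k - rank l ≠ 0) :
    rebalInsL l k r = (node l k r, 0, 0) := by
  rw [rebalInsL.eq_def, if_pos h]

lemma rebalInsL_promote {k : ℤ} {l r : RTree} (h0 : k - rank l = 0) (h1 : k - rank r = 1) :
    rebalInsL l k r = (node l (k + 1) r, 1, 0) := by
  rw [rebalInsL.eq_def, if_neg (by simp [h0]), if_pos h1]

lemma rebalInsR_noop {k : ℤ} (l : RTree) {r : RTree} (h : k - rank r ≠ 0) :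
    rebalInsR l k r = (node l k r, 0, 0) := by
  rw [rebalInsR.eq_def, if_pos h]

lemma rebalInsR_promote {k : ℤ} {l r : RTree} (h0 : k - rank r = 0) (h1 : k - rank l = 1) :
    rebalInsR l k r = (node l (k + 1) r, 1, 0) := by
  rw [rebalInsR.eq_def, if_neg (by simp [h0]), if_pos h1]

lemma subtreeAt_left (l : RTree) (k : ℤ) (r : RTree) (p : List Bool) :
    subtreeAt (node l k r) (false :: p) = subtreeAt l p := rfl

lemma subtreeAt_right (l : RTree) (k : ℤ) (r : RTree) (p : List Bool) :
    subtreeAt (node l k r) (true :: p) = subtreeAt r p := rfl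

lemma truncate_node {l r : RTree} (k : ℤ) (h : ¬(l = nil ∧ r = nil)) :
    truncate (node l k r) = node (truncate l) (k - 1) (truncate r) := by
  cases l <;> cases r <;> first
    | rfl
    | exact absurd ⟨rfl, rfl⟩ h


/-- A single insertion step that causes no rotations and at most one
promotion per level. -/
def Good (t : RTree) (p : List Bool) : Prop :=
  subtreeAt t p = some nil ∧ (insAt t p).2.2 = 0 ∧ (insAt t p).2.1 ≤ p.length + 1

/-- A chain of good insertions all of whose intermediate trees (including
endpoints) have root rank `c`. -/
def CFlat (c : ℤ) : RTree → List (List Bool) → RTree → Prop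
  | t, [], t' => t = t' ∧ rank t = c
  | t, p :: ps, t' => Good t p ∧ rank t = c ∧ CFlat c (insAt t p).1 ps t'

/-- A chain of good insertions whose root rank starts at `c`, is raised to
`c + 1` by exactly one insertion, and stays `c + 1` afterwards. -/
def CRaise (c : ℤ) : RTree → List (List Bool) → RTree → Prop
  | _, [], _ => False
  | t, p :: ps, t' => Good t p ∧ rank t = c ∧
      ((rank (insAt t p).1 = c + 1 ∧ CFlat (c + 1) (insAt t p).1 ps t') ∨
       CRaise c (insAt t p).1 ps t')

lemma CFlat.rank_start {c : ℤ} {t t' : RTree} {ps : List (List Bool)}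
    (h : CFlat c t ps t') : rank t = c := by
  cases ps with
  | nil => exact h.2
  | cons p ps => exact h.2.1

lemma CRaise.rank_start {c : ℤ} {t t' : RTree} {ps : List (List Bool)}
    (h : CRaise c t ps t') : rank t = c := by
  cases ps with
  | nil => exact h.elim
  | cons p ps => exact h.2.1

/-- `rank` of the tree after one good insertion step inside a chain. -/
lemma rank_after_flat {c : ℤ} {t t' : RTree} {p : List Bool} {ps : List (List Bool)}
    (h : CFlat c (insAt t p).1 ps t') : rank (insAt t p).1 = c := h.rank_start

lemma good_liftL_noop {l : RTree} {p : List Bool} (k : ℤ) (r : RTree)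
    (hG : Good l p) (h : k - rank (insAt l p).1 ≠ 0) :
    Good (node l k r) (false :: p) ∧
      insAt (node l k r) (false :: p) =
        (node (insAt l p).1 k r, (insAt l p).2.1, (insAt l p).2.2) := by
  have he : insAt (node l k r) (false :: p) =
      (node (insAt l p).1 k r, (insAt l p).2.1, (insAt l p).2.2) := by
    rw [insAt_left, rebalInsL_noop r h]; simp
  refine ⟨⟨?_, ?_, ?_⟩, he⟩
  · rw [subtreeAt_left]; exact hG.1
  · rw [he]; exact hG.2.1
  · rw [he]; exact le_trans hG.2.2 (by simp)

lemma good_liftL_promote {l : RTree} {p : List Bool} {k : ℤ} {r : RTree}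
    (hG : Good l p) (h0 : k - rank (insAt l p).1 = 0) (h1 : k - rank r = 1) :
    Good (node l k r) (false :: p) ∧
      insAt (node l k r) (false :: p) =
        (node (insAt l p).1 (k + 1) r, (insAt l p).2.1 + 1, (insAt l p).2.2) := by
  have he : insAt (node l k r) (false :: p) =
      (node (insAt l p).1 (k + 1) r, (insAt l p).2.1 + 1, (insAt l p).2.2) := by
    rw [insAt_left, rebalInsL_promote h0 h1]; simp
  refine ⟨⟨?_, ?_, ?_⟩, he⟩
  · rw [subtreeAt_left]; exact hG.1
  · rw [he]; exact hG.2.1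
  · rw [he]
    have := hG.2.2
    simp only [List.length_cons]
    omega

lemma good_liftR_noop {r : RTree} {p : List Bool} (k : ℤ) (l : RTree)
    (hG : Good r p) (h : k - rank (insAt r p).1 ≠ 0) :
    Good (node l k r) (true :: p) ∧
      insAt (node l k r) (true :: p) =
        (node l k (insAt r p).1, (insAt r p).2.1, (insAt r p).2.2) := by
  have he : insAt (node l k r) (true :: p) =
      (node l k (insAt r p).1, (insAt r p).2.1, (insAt r p).2.2) := by
    rw [insAt_right, rebalInsR_noop l h]; simp
  refine ⟨⟨?_, ?_, ?_⟩, he⟩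
  · rw [subtreeAt_right]; exact hG.1
  · rw [he]; exact hG.2.1
  · rw [he]; exact le_trans hG.2.2 (by simp)

lemma good_liftR_promote {r : RTree} {p : List Bool} {k : ℤ} {l : RTree}
    (hG : Good r p) (h0 : k - rank (insAt r p).1 = 0) (h1 : k - rank l = 1) :
    Good (node l k r) (true :: p) ∧
      insAt (node l k r) (true :: p) =
        (node l (k + 1) (insAt r p).1, (insAt r p).2.1 + 1, (insAt r p).2.2) := by
  have he : insAt (node l k r) (true :: p) =
      (node l (k + 1) (insAt r p).1, (insAt r p).2.1 + 1, (insAt r p).2.2) := by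
    rw [insAt_right, rebalInsR_promote h0 h1]; simp
  refine ⟨⟨?_, ?_, ?_⟩, he⟩
  · rw [subtreeAt_right]; exact hG.1
  · rw [he]; exact hG.2.1
  · rw [he]
    have := hG.2.2
    simp only [List.length_cons]
    omega


lemma cflat_liftL {c k : ℤ} (R : RTree) (hk : k ≠ c) :
    ∀ {ps : List (List Bool)} {L L' : RTree}, CFlat c L ps L' →
      CFlat k (node L k R) (ps.map (fun p => false :: p)) (node L' k R) := by
  intro ps
  induction ps with
  | nil => intro L L' h; exact ⟨by rw [h.1], rfl⟩
  | cons p ps ih =>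
    intro L L' h
    obtain ⟨hG, hrank, htail⟩ := h
    have hrk : rank (insAt L p).1 = c := htail.rank_start
    have hne : k - rank (insAt L p).1 ≠ 0 := by rw [hrk]; exact sub_ne_zero.mpr hk
    obtain ⟨hG', he⟩ := good_liftL_noop k R hG hne
    refine ⟨hG', rfl, ?_⟩
    rw [he]
    exact ih htail

lemma cflat_liftR {c k : ℤ} (L : RTree) (hk : k ≠ c) :
    ∀ {ps : List (List Bool)} {R R' : RTree}, CFlat c R ps R' →
      CFlat k (node L k R) (ps.map (fun p => true :: p)) (node L k R') := by
  intro ps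
  induction ps with
  | nil => intro R R' h; exact ⟨by rw [h.1], rfl⟩
  | cons p ps ih =>
    intro R R' h
    obtain ⟨hG, hrank, htail⟩ := h
    have hrk : rank (insAt R p).1 = c := htail.rank_start
    have hne : k - rank (insAt R p).1 ≠ 0 := by rw [hrk]; exact sub_ne_zero.mpr hk
    obtain ⟨hG', he⟩ := good_liftR_noop k L hG hne
    refine ⟨hG', rfl, ?_⟩
    rw [he]
    exact ih htail

lemma craise_liftL_flat {c k : ℤ} (R : RTree) (hk1 : k ≠ c) (hk2 : k ≠ c + 1) :
    ∀ {ps : List (List Bool)} {L L' : RTree}, CRaise c L ps L' →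
      CFlat k (node L k R) (ps.map (fun p => false :: p)) (node L' k R) := by
  intro ps
  induction ps with
  | nil => intro L L' h; exact h.elim
  | cons p ps ih =>
    intro L L' h
    obtain ⟨hG, hrank, hd⟩ := h
    rcases hd with ⟨hr2, htail⟩ | htail
    · have hne : k - rank (insAt L p).1 ≠ 0 := by rw [hr2]; exact sub_ne_zero.mpr hk2
      obtain ⟨hG', he⟩ := good_liftL_noop k R hG hne
      refine ⟨hG', rfl, ?_⟩
      rw [he]
      exact cflat_liftL R hk2 htail
    · have hrk : rank (insAt L p).1 = c := htail.rank_start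
      have hne : k - rank (insAt L p).1 ≠ 0 := by rw [hrk]; exact sub_ne_zero.mpr hk1
      obtain ⟨hG', he⟩ := good_liftL_noop k R hG hne
      refine ⟨hG', rfl, ?_⟩
      rw [he]
      exact ih htail

lemma craise_liftR_flat {c k : ℤ} (L : RTree) (hk1 : k ≠ c) (hk2 : k ≠ c + 1) :
    ∀ {ps : List (List Bool)} {R R' : RTree}, CRaise c R ps R' →
      CFlat k (node L k R) (ps.map (fun p => true :: p)) (node L k R') := by
  intro ps
  induction ps with
  | nil => intro R R' h; exact h.elim
  | cons p ps ih =>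
    intro R R' h
    obtain ⟨hG, hrank, hd⟩ := h
    rcases hd with ⟨hr2, htail⟩ | htail
    · have hne : k - rank (insAt R p).1 ≠ 0 := by rw [hr2]; exact sub_ne_zero.mpr hk2
      obtain ⟨hG', he⟩ := good_liftR_noop k L hG hne
      refine ⟨hG', rfl, ?_⟩
      rw [he]
      exact cflat_liftR L hk2 htail
    · have hrk : rank (insAt R p).1 = c := htail.rank_start
      have hne : k - rank (insAt R p).1 ≠ 0 := by rw [hrk]; exact sub_ne_zero.mpr hk1
      obtain ⟨hG', he⟩ := good_liftR_noop k L hG hne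
      refine ⟨hG', rfl, ?_⟩
      rw [he]
      exact ih htail

lemma craise_liftL_raise {c : ℤ} {R : RTree} (hR : rank R = c) :
    ∀ {ps : List (List Bool)} {L L' : RTree}, CRaise c L ps L' →
      CRaise (c + 1) (node L (c + 1) R) (ps.map (fun p => false :: p)) (node L' (c + 2) R) := by
  intro ps
  induction ps with
  | nil => intro L L' h; exact h.elim
  | cons p ps ih =>
    intro L L' h
    obtain ⟨hG, hrank, hd⟩ := h
    rcases hd with ⟨hr2, htail⟩ | htail
    · -- the raising step: the root is promoted
      have h0 : (c + 1) - rank (insAt L p).1 = 0 := by rw [hr2]; ring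
      have h1 : (c + 1) - rank R = 1 := by rw [hR]; ring
      obtain ⟨hG', he⟩ := good_liftL_promote hG h0 h1
      refine ⟨hG', rfl, Or.inl ⟨?_, ?_⟩⟩
      · rw [he]; rfl
      · rw [he]
        have : CFlat (c + 2) (node (insAt L p).1 (c + 2) R)
            (ps.map (fun p => false :: p)) (node L' (c + 2) R) :=
          cflat_liftL R (by omega) htail
        show CFlat (c + 1 + 1) (node (insAt L p).1 (c + 1 + 1) R) _ _
        have h2 : c + 1 + 1 = c + 2 := by ring
        rw [h2]
        exact this
    · have hrk : rank (insAt L p).1 = c := htail.rank_start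
      have hne : (c + 1) - rank (insAt L p).1 ≠ 0 := by rw [hrk]; intro hc; omega
      obtain ⟨hG', he⟩ := good_liftL_noop (c + 1) R hG hne
      refine ⟨hG', rfl, Or.inr ?_⟩
      rw [he]
      exact ih htail

lemma craise_liftR_raise {c : ℤ} {L : RTree} (hL : rank L = c) :
    ∀ {ps : List (List Bool)} {R R' : RTree}, CRaise c R ps R' →
      CRaise (c + 1) (node L (c + 1) R) (ps.map (fun p => true :: p)) (node L (c + 2) R') := by
  intro ps
  induction ps with
  | nil => intro R R' h; exact h.elim
  | cons p ps ih =>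
    intro R R' h
    obtain ⟨hG, hrank, hd⟩ := h
    rcases hd with ⟨hr2, htail⟩ | htail
    · have h0 : (c + 1) - rank (insAt R p).1 = 0 := by rw [hr2]; ring
      have h1 : (c + 1) - rank L = 1 := by rw [hL]; ring
      obtain ⟨hG', he⟩ := good_liftR_promote hG h0 h1
      refine ⟨hG', rfl, Or.inl ⟨?_, ?_⟩⟩
      · rw [he]; rfl
      · rw [he]
        have : CFlat (c + 2) (node L (c + 2) (insAt R p).1)
            (ps.map (fun p => true :: p)) (node L (c + 2) R') :=
          cflat_liftR L (by omega) htail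
        show CFlat (c + 1 + 1) (node L (c + 1 + 1) (insAt R p).1) _ _
        have h2 : c + 1 + 1 = c + 2 := by ring
        rw [h2]
        exact this
    · have hrk : rank (insAt R p).1 = c := htail.rank_start
      have hne : (c + 1) - rank (insAt R p).1 ≠ 0 := by rw [hrk]; intro hc; omega
      obtain ⟨hG', he⟩ := good_liftR_noop (c + 1) L hG hne
      refine ⟨hG', rfl, Or.inr ?_⟩
      rw [he]
      exact ih htail

lemma cflat_append {c : ℤ} :
    ∀ {ps qs : List (List Bool)} {s t u : RTree},
      CFlat c s ps t → CFlat c t qs u → CFlat c s (ps ++ qs) u := by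
  intro ps
  induction ps with
  | nil => intro qs s t u h1 h2; rw [List.nil_append, h1.1]; exact h2
  | cons p ps ih =>
    intro qs s t u h1 h2
    exact ⟨h1.1, h1.2.1, ih h1.2.2 h2⟩

lemma cflat_craise_append {c : ℤ} :
    ∀ {ps qs : List (List Bool)} {s t u : RTree},
      CFlat c s ps t → CRaise c t qs u → CRaise c s (ps ++ qs) u := by
  intro ps
  induction ps with
  | nil => intro qs s t u h1 h2; rw [List.nil_append, h1.1]; exact h2
  | cons p ps ih =>
    intro qs s t u h1 h2
    exact ⟨h1.1, h1.2.1, Or.inr (ih h1.2.2 h2)⟩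

lemma craise_cflat_append {c : ℤ} :
    ∀ {ps qs : List (List Bool)} {s t u : RTree},
      CRaise c s ps t → CFlat (c + 1) t qs u → CRaise c s (ps ++ qs) u := by
  intro ps
  induction ps with
  | nil => intro qs s t u h1 _; exact h1.elim
  | cons p ps ih =>
    intro qs s t u h1 h2
    obtain ⟨hG, hrank, hd⟩ := h1
    rcases hd with ⟨hr2, htail⟩ | htail
    · exact ⟨hG, hrank, Or.inl ⟨hr2, cflat_append htail h2⟩⟩
    · exact ⟨hG, hrank, Or.inr (ih htail h2)⟩


/-- The insertion paths used to rebuild a tree from its truncation: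
rebuild the lower child first, then the higher child. -/
def steps : RTree → List (List Bool)
  | nil => []
  | node l k r =>
      if l = nil ∧ r = nil then [[]]
      else if k - rank r = 2 then
        (steps r).map (fun p => true :: p) ++ (steps l).map (fun p => false :: p)
      else
        (steps l).map (fun p => false :: p) ++ (steps r).map (fun p => true :: p)

lemma rank_ge_neg_one {t : RTree} (h : IsAVL t) : -1 ≤ rank t := by
  cases t with
  | nil => simp [rank]
  | node l k r => have := h.2.2.1; simp [rank]; omega

lemma rank_nil_iff {t : RTree} (h : IsAVL t) : rank t = -1 ↔ t = nil := by
  cases t with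
  | nil => simp [rank]
  | node l k r =>
    have := h.2.2.1
    simp only [rank]
    constructor
    · intro hc; omega
    · intro hc; exact absurd hc (by simp)

lemma craise_cflat_append' {c d : ℤ} {ps qs : List (List Bool)} {s t u : RTree}
    (h1 : CRaise c s ps t) (h2 : CFlat d t qs u) (hd : d = c + 1) :
    CRaise c s (ps ++ qs) u := by
  subst hd; exact craise_cflat_append h1 h2

lemma main_chain : ∀ t : RTree, IsAVL t → t ≠ nil →
    CRaise (rank t - 1) (truncate t) (steps t) t := by
  intro t
  induction t with
  | nil => intro _ h; exact absurd rfl h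
  | node l k r ihl ihr =>
    intro hT _
    obtain ⟨hl, hr, hk0, hbal⟩ := hT
    by_cases hleaf : l = nil ∧ r = nil
    · -- `t` is a leaf
      obtain ⟨rfl, rfl⟩ := hleaf
      have hk : k = 0 := by simp [rank] at hbal; omega
      subst hk
      show CRaise (rank (node nil 0 nil) - 1) (truncate (node nil 0 nil))
        (steps (node nil 0 nil)) (node nil 0 nil)
      have hs : steps (node nil 0 nil) = [[]] := by rw [steps]; simp
      have htr0 : truncate (node nil 0 nil) = nil := rfl
      rw [hs, htr0]
      refine ⟨⟨rfl, rfl, by norm_num [insAt]⟩, by norm_num [rank], Or.inl ⟨?_, ?_, ?_⟩⟩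
      · show rank (node nil 0 nil) = rank (node nil 0 nil) - 1 + 1; ring
      · rfl
      · show rank (node nil 0 nil) = rank (node nil 0 nil) - 1 + 1; ring
    · -- `t` is not a leaf
      have htr : truncate (node l k r) = node (truncate l) (k - 1) (truncate r) :=
        truncate_node k hleaf
      have hrl1 : -1 ≤ rank l := rank_ge_neg_one hl
      have hrr1 : -1 ≤ rank r := rank_ge_neg_one hr
      show CRaise (rank (node l k r) - 1) _ _ _
      have hrk : rank (node l k r) = k := rfl
      rw [hrk, htr]
      by_cases hB : k - rank r = 2
      · -- right child is the lower one: rebuild right, then left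
        have hrl : k - rank l = 1 := by rcases hbal with ⟨h1,h2⟩|⟨h1,h2⟩|⟨h1,h2⟩ <;> omega
        have hlne : l ≠ nil := by
          intro hc; rw [hc] at hrl; simp [rank] at hrl; omega
        have hil := ihl hl hlne
        have hsl : rank l = k - 1 := by omega
        have hsteps : steps (node l k r) =
            (steps r).map (fun p => true :: p) ++ (steps l).map (fun p => false :: p) := by
          rw [steps]; simp [hleaf, hB]
        rw [hsteps]
        -- phase 1 : rebuild the right subtree, root rank stays k - 1
        have phase1 : CFlat (k - 1) (node (truncate l) (k - 1) (truncate r))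
            ((steps r).map (fun p => true :: p)) (node (truncate l) (k - 1) r) := by
          by_cases hrne : r = nil
          · subst hrne
            show CFlat (k-1) _ ((steps nil).map _) _
            rw [steps]
            exact ⟨rfl, rfl⟩
          · have hirc := ihr hr hrne
            have := craise_liftR_flat (c := rank r - 1) (k := k - 1) (truncate l)
              (by omega) (by omega) hirc
            exact this
        -- phase 2 : rebuild the left subtree, raising the root
        have phase2 : CRaise (k - 1) (node (truncate l) (k - 1) r)
            ((steps l).map (fun p => false :: p)) (node l k r) := by
          have hRr : rank r = k - 2 := by omega
          have hcl : CRaise (k - 2) (truncate l) (steps l) l := by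
            have h' := hil
            have he : rank l - 1 = k - 2 := by omega
            rw [he] at h'; exact h'
          have h2' := craise_liftL_raise (c := k - 2) (R := r) hRr hcl
          have e1 : k - 2 + 1 = k - 1 := by ring
          have e2 : k - 2 + 2 = k := by ring
          rw [e1, e2] at h2'
          exact h2'
        exact cflat_craise_append phase1 phase2
      · -- right child is the higher one
        have hrr : k - rank r = 1 := by rcases hbal with ⟨h1,h2⟩|⟨h1,h2⟩|⟨h1,h2⟩ <;> omega
        have hrne : r ≠ nil := by
          intro hc; rw [hc] at hrr; simp [rank] at hrr
          rcases hbal with ⟨h1,h2⟩|⟨h1,h2⟩|⟨h1,h2⟩ <;>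
            first
            | omega
            | exact hleaf ⟨(rank_nil_iff hl).mp (by omega), (rank_nil_iff hr).mp (by omega)⟩
        have hirc := ihr hr hrne
        have hsr : rank r = k - 1 := by omega
        have hsteps : steps (node l k r) =
            (steps l).map (fun p => false :: p) ++ (steps r).map (fun p => true :: p) := by
          rw [steps]; simp [hleaf, hB]
        rw [hsteps]
        rcases hbal with ⟨h1, h2⟩ | ⟨h1, h2⟩ | ⟨h1, h2⟩
        · -- 1,1 node : left raise promotes the root, then right is rebuilt flat
          have hlne : l ≠ nil := by
            intro hc; rw [hc] at h1; simp [rank] at h1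
            exact hrne ((rank_nil_iff hr).mp (by omega))
          have hil := ihl hl hlne
          have phase1 : CRaise (k - 1) (node (truncate l) (k - 1) (truncate r))
              ((steps l).map (fun p => false :: p)) (node l k (truncate r)) := by
            have hRr : rank (truncate r) = k - 2 := by
              have := hirc.rank_start; omega
            have hcl : CRaise (k - 2) (truncate l) (steps l) l := by
              have h' := hil
              have he : rank l - 1 = k - 2 := by omega
              rw [he] at h'; exact h'
            have h2' := craise_liftL_raise (c := k - 2) (R := truncate r) hRr hcl
            have e1 : k - 2 + 1 = k - 1 := by ring
            have e2 : k - 2 + 2 = k := by ring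
            rw [e1, e2] at h2'
            exact h2'
          have phase2 : CFlat k (node l k (truncate r))
              ((steps r).map (fun p => true :: p)) (node l k r) := by
            exact craise_liftR_flat (c := rank r - 1) (L := l) (k := k)
              (by omega) (by omega) hirc
          exact craise_cflat_append' phase1 phase2 (by ring)
        · omega
        · -- 2,1 node : left rebuilt flat first, then right raise promotes the root
          have phase1 : CFlat (k - 1) (node (truncate l) (k - 1) (truncate r))
              ((steps l).map (fun p => false :: p)) (node l (k - 1) (truncate r)) := by
            by_cases hlne : l = nil
            · subst hlne
              show CFlat (k-1) _ ((steps nil).map _) _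
              rw [steps]
              exact ⟨rfl, rfl⟩
            · have hil := ihl hl hlne
              have h' := craise_liftL_flat (c := rank l - 1) (k := k - 1) (truncate r)
                (by omega) (by omega) hil
              exact h'
          have phase2 : CRaise (k - 1) (node l (k - 1) (truncate r))
              ((steps r).map (fun p => true :: p)) (node l k r) := by
            have hLl : rank l = k - 2 := by omega
            have hcr : CRaise (k - 2) (truncate r) (steps r) r := by
              have h' := hirc
              have he : rank r - 1 = k - 2 := by omega
              rw [he] at h'; exact h'
            have h2' := craise_liftR_raise (c := k - 2) (L := l) hLl hcr
            have e1 : k - 2 + 1 = k - 1 := by ring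
            have e2 : k - 2 + 2 = k := by ring
            rw [e1, e2] at h2'
            exact h2'
          exact cflat_craise_append phase1 phase2


/-- Turn a flat chain into an explicit sequence of trees and paths. -/
lemma ofCFlat : ∀ (ps : List (List Bool)) (c : ℤ) (s t : RTree), CFlat c s ps t →
    ∃ (m : ℕ) (f : ℕ → RTree) (q : ℕ → List Bool),
      f 0 = s ∧ f m = t ∧
      (∀ i < m,
        subtreeAt (f i) (q i) = some nil ∧
        f (i + 1) = (insAt (f i) (q i)).1 ∧
        (insAt (f i) (q i)).2.2 = 0 ∧
        (insAt (f i) (q i)).2.1 ≤ (q i).length + 1) ∧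
      (∀ i ≤ m, rank (f i) = c) := by
  intro ps
  induction ps with
  | nil =>
    intro c s t h
    exact ⟨0, fun _ => s, fun _ => [], rfl, h.1, by omega, fun i _ => h.2⟩
  | cons p ps ih =>
    intro c s t h
    obtain ⟨hG, hrank, htail⟩ := h
    obtain ⟨m, f, q, hf0, hfm, hstep, hprof⟩ := ih c _ t htail
    refine ⟨m + 1, fun i => if i = 0 then s else f (i - 1),
      fun i => if i = 0 then p else q (i - 1), by simp, by simpa using hfm, ?_, ?_⟩
    · intro i hi
      rcases Nat.eq_zero_or_pos i with rfl | hpos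
      · simp only [if_pos rfl, if_neg (Nat.one_ne_zero)]
        exact ⟨hG.1, by simpa using hf0, hG.2.1, hG.2.2⟩
      · have h1 : i ≠ 0 := by omega
        have h2 : i + 1 ≠ 0 := by omega
        simp only [if_neg h1, if_neg h2]
        have h3 : i + 1 - 1 = (i - 1) + 1 := by omega
        rw [h3]
        exact hstep (i - 1) (by omega)
    · intro i hi
      rcases Nat.eq_zero_or_pos i with rfl | hpos
      · simpa using hrank
      · have h1 : i ≠ 0 := by omega
        simp only [if_neg h1]
        exact hprof (i - 1) (by omega)

/-- Turn a raising chain into an explicit sequence of trees and paths,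
with the rank profile. -/
lemma ofCRaise : ∀ (ps : List (List Bool)) (c : ℤ) (s t : RTree), CRaise c s ps t →
    ∃ (m : ℕ) (f : ℕ → RTree) (q : ℕ → List Bool),
      f 0 = s ∧ f m = t ∧
      (∀ i < m,
        subtreeAt (f i) (q i) = some nil ∧
        f (i + 1) = (insAt (f i) (q i)).1 ∧
        (insAt (f i) (q i)).2.2 = 0 ∧
        (insAt (f i) (q i)).2.1 ≤ (q i).length + 1) ∧
      ∃ i₀ < m, (∀ i ≤ i₀, rank (f i) = c) ∧
        (∀ i, i₀ < i → i ≤ m → rank (f i) = c + 1) := by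
  intro ps
  induction ps with
  | nil => intro c s t h; exact h.elim
  | cons p ps ih =>
    intro c s t h
    obtain ⟨hG, hrank, hd⟩ := h
    rcases hd with ⟨hr2, htail⟩ | htail
    · -- this is the raising step
      obtain ⟨m, f, q, hf0, hfm, hstep, hprof⟩ := ofCFlat ps (c + 1) _ t htail
      refine ⟨m + 1, fun i => if i = 0 then s else f (i - 1),
        fun i => if i = 0 then p else q (i - 1), by simp, by simpa using hfm, ?_,
        0, by omega, ?_, ?_⟩
      · intro i hi
        rcases Nat.eq_zero_or_pos i with rfl | hpos
        · simp only [if_pos rfl, if_neg (Nat.one_ne_zero)]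
          exact ⟨hG.1, by simpa using hf0, hG.2.1, hG.2.2⟩
        · have h1 : i ≠ 0 := by omega
          have h2 : i + 1 ≠ 0 := by omega
          simp only [if_neg h1, if_neg h2]
          have h3 : i + 1 - 1 = (i - 1) + 1 := by omega
          rw [h3]
          exact hstep (i - 1) (by omega)
      · intro i hi
        have : i = 0 := by omega
        subst this
        simpa using hrank
      · intro i hi him
        have h1 : i ≠ 0 := by omega
        simp only [if_neg h1]
        exact hprof (i - 1) (by omega)
    · -- the raise happens later
      obtain ⟨m, f, q, hf0, hfm, hstep, i₀, hi₀, hlow, hhigh⟩ := ih c _ t htail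
      refine ⟨m + 1, fun i => if i = 0 then s else f (i - 1),
        fun i => if i = 0 then p else q (i - 1), by simp, by simpa using hfm, ?_,
        i₀ + 1, by omega, ?_, ?_⟩
      · intro i hi
        rcases Nat.eq_zero_or_pos i with rfl | hpos
        · simp only [if_pos rfl, if_neg (Nat.one_ne_zero)]
          exact ⟨hG.1, by simpa using hf0, hG.2.1, hG.2.2⟩
        · have h1 : i ≠ 0 := by omega
          have h2 : i + 1 ≠ 0 := by omega
          simp only [if_neg h1, if_neg h2]
          have h3 : i + 1 - 1 = (i - 1) + 1 := by omega
          rw [h3]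
          exact hstep (i - 1) (by omega)
      · intro i hi
        rcases Nat.eq_zero_or_pos i with rfl | hpos
        · simpa using hrank
        · have h1 : i ≠ 0 := by omega
          simp only [if_neg h1]
          exact hlow (i - 1) (by omega)
      · intro i hi him
        have h1 : i ≠ 0 := by omega
        simp only [if_neg h1]
        exact hhigh (i - 1) (by omega) (by omega)

theorem truncation_rebuild' (t : RTree) (hT : IsAVL t) (hne : t ≠ nil) :
    ∃ (m : ℕ) (f : ℕ → RTree) (q : ℕ → List Bool),
      f 0 = truncate t ∧ f m = t ∧
      (∀ i < m,
        subtreeAt (f i) (q i) = some nil ∧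
        f (i + 1) = (insAt (f i) (q i)).1 ∧
        (insAt (f i) (q i)).2.2 = 0 ∧
        (insAt (f i) (q i)).2.1 ≤ (q i).length + 1) ∧
      (∃! i, i < m ∧ rank (f (i + 1)) = rank (f i) + 1) := by
  obtain ⟨m, f, q, hf0, hfm, hstep, i₀, hi₀, hlow, hhigh⟩ :=
    ofCRaise (steps t) (rank t - 1) (truncate t) t (main_chain t hT hne)
  refine ⟨m, f, q, hf0, hfm, hstep, i₀, ⟨hi₀, ?_⟩, ?_⟩
  · have e1 : rank (f i₀) = rank t - 1 := hlow i₀ le_rfl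
    have e2 : rank (f (i₀ + 1)) = rank t - 1 + 1 := hhigh (i₀ + 1) (by omega) (by omega)
    omega
  · rintro j ⟨hjm, hj⟩
    by_contra hne'
    rcases Nat.lt_trichotomy j i₀ with hlt | heq | hgt
    · have e1 : rank (f j) = rank t - 1 := hlow j (by omega)
      have e2 : rank (f (j + 1)) = rank t - 1 := hlow (j + 1) (by omega)
      omega
    · exact hne' heq
    · have e1 : rank (f j) = rank t - 1 + 1 := hhigh j (by omega) (by omega)
      have e2 : rank (f (j + 1)) = rank t - 1 + 1 := hhigh (j + 1) (by omega) (by omega)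
      omega


/-- The truncation of an AVL tree `T` can be converted back into `T` by a
sequence of promotion-only insertions in which each insertion causes at most
one promotion per level (at most one promotion per node on its insertion
path), and exactly one insertion of the sequence increases the rank of the
root. -/
theorem truncation_rebuild (t : RTree) (hT : IsAVL t) (hne : t ≠ nil) :
    ∃ (m : ℕ) (f : ℕ → RTree) (q : ℕ → List Bool),
      f 0 = truncate t ∧ f m = t ∧
      (∀ i < m,
        subtreeAt (f i) (q i) = some nil ∧
        f (i + 1) = (insAt (f i) (q i)).1 ∧
        (insAt (f i) (q i)).2.2 = 0 ∧
        (insAt (f i) (q i)).2.1 ≤ (q i).length + 1) ∧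
      (∃! i, i < m ∧ rank (f (i + 1)) = rank (f i) + 1) := by
  exact truncation_rebuild' t hT hne

end RTree
end
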